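/- Let X ∈ ℝ^{n×d} have rank d and let P = X Λ Yᵀ with partial SVD P = U_P Σ_P V_Pᵀ, Σ_P ∈ ℝ^{d×d} invertible. Define X_P = U_P Σ_P^{1/2}. Then there exists an invertible matrix L̃ ∈ GL(d) such that X_P = X L̃. Moreover, if Y^{(r)} has rank d_r, then Y_P^{(r)} := V_P^{(r)} Σ_P^{1/2} satisfies Y_P^{(r)} = Y^{(r)} R̃_r for some R̃_r ∈ ℝ^{d_r×d} with L̃ R̃_rᵀ = Λ_r; in particular rank(R̃_r) = rank(Λ_r). -/

import Mathlib

open Matrix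

lemma isUnit_det_of_rank_eq {d : ℕ} (A : Matrix (Fin d) (Fin d) ℝ)
    (h : A.rank = d) : IsUnit A.det := by
  rw [← Matrix.isUnit_iff_isUnit_det, ← Matrix.mulVec_surjective_iff_isUnit]
  have : LinearMap.range A.mulVecLin = ⊤ := by
    apply Submodule.eq_top_of_finrank_eq
    rw [← Matrix.rank, h]
    simp
  intro v
  obtain ⟨w, hw⟩ := LinearMap.range_eq_top.mp this v
  exact ⟨w, hw⟩

/-- Existence of the linear transformations relating the spectral embeddings of the
unfolded probability matrix `P = X Λ Yᵀ` to the latent positions: there exists an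
invertible `L̃` with `X_P = X L̃`, and for each block with `Y^{(r)}` of full column rank
there exists `R̃_r` with `Y_P^{(r)} = Y^{(r)} R̃_r`, `L̃ R̃_rᵀ = Λ_r` and
`rank R̃_r = rank Λ_r`. -/
theorem embedding_linear_transformations {n N D d Nr dr : ℕ}
    (X : Matrix (Fin n) (Fin d) ℝ) (Λ : Matrix (Fin d) (Fin D) ℝ)
    (Y : Matrix (Fin N) (Fin D) ℝ) (P : Matrix (Fin n) (Fin N) ℝ)
    (UP : Matrix (Fin n) (Fin d) ℝ) (VP : Matrix (Fin N) (Fin d) ℝ)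
    (σ : Fin d → ℝ)
    (Λr : Matrix (Fin d) (Fin dr) ℝ) (Yr : Matrix (Fin Nr) (Fin dr) ℝ)
    (VPr : Matrix (Fin Nr) (Fin d) ℝ)
    (hP : P = X * Λ * Yᵀ)
    (hSVD : P = UP * Matrix.diagonal σ * VPᵀ)
    (hUP : UPᵀ * UP = 1) (hVP : VPᵀ * VP = 1)
    (hσ : ∀ i, 0 < σ i)
    (hX : X.rank = d) (hYr : Yr.rank = dr)
    (hblock : UP * Matrix.diagonal σ * VPrᵀ = X * Λr * Yrᵀ) :
    ∃ (L : Matrix (Fin d) (Fin d) ℝ) (R : Matrix (Fin dr) (Fin d) ℝ),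
      IsUnit L.det ∧
      UP * Matrix.diagonal (fun i => Real.sqrt (σ i)) = X * L ∧
      VPr * Matrix.diagonal (fun i => Real.sqrt (σ i)) = Yr * R ∧
      L * Rᵀ = Λr ∧
      R.rank = Λr.rank := by
  set Dm : Matrix (Fin d) (Fin d) ℝ := Matrix.diagonal (fun i => Real.sqrt (σ i)) with hDm
  set Di : Matrix (Fin d) (Fin d) ℝ :=
    Matrix.diagonal (fun i => (Real.sqrt (σ i))⁻¹) with hDi
  have hsqrt_pos : ∀ i, 0 < Real.sqrt (σ i) := fun i => Real.sqrt_pos.mpr (hσ i)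
  have hDmDi : Dm * Di = 1 := by
    rw [hDm, hDi, Matrix.diagonal_mul_diagonal, ← Matrix.diagonal_one]
    exact congrArg Matrix.diagonal (funext fun i => mul_inv_cancel₀ (hsqrt_pos i).ne')
  have hDiDm : Di * Dm = 1 := by
    rw [hDm, hDi, Matrix.diagonal_mul_diagonal, ← Matrix.diagonal_one]
    exact congrArg Matrix.diagonal (funext fun i => inv_mul_cancel₀ (hsqrt_pos i).ne')
  have hDD : Dm * Dm = Matrix.diagonal σ := by
    rw [hDm, Matrix.diagonal_mul_diagonal]
    exact congrArg Matrix.diagonal (funext fun i => Real.mul_self_sqrt (hσ i).le)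
  -- Key identity: X * Λ * Yᵀ * VP = UP * diagonal σ
  have heq1 : X * Λ * Yᵀ * VP = UP * Matrix.diagonal σ := by
    have h1 : X * Λ * Yᵀ = UP * Matrix.diagonal σ * VPᵀ := by rw [← hP, hSVD]
    calc X * Λ * Yᵀ * VP = UP * Matrix.diagonal σ * VPᵀ * VP := by rw [h1]
      _ = UP * Matrix.diagonal σ * (VPᵀ * VP) := by rw [Matrix.mul_assoc]
      _ = UP * Matrix.diagonal σ := by rw [hVP, Matrix.mul_one]
  set L : Matrix (Fin d) (Fin d) ℝ := Λ * Yᵀ * VP * Di with hLdef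
  have hXL : X * L = UP * Dm := by
    calc X * L = X * Λ * Yᵀ * VP * Di := by
          rw [hLdef]; simp only [Matrix.mul_assoc]
      _ = UP * Matrix.diagonal σ * Di := by rw [heq1]
      _ = UP * (Dm * Dm * Di) := by rw [hDD, Matrix.mul_assoc]
      _ = UP * Dm := by rw [Matrix.mul_assoc (Dm), hDmDi, Matrix.mul_one]
  set M : Matrix (Fin d) (Fin d) ℝ := Di * UPᵀ * X with hMdef
  have hML : M * L = 1 := by
    calc M * L = Di * UPᵀ * (X * L) := by
          rw [hMdef]; simp only [Matrix.mul_assoc]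
      _ = Di * UPᵀ * (UP * Dm) := by rw [hXL]
      _ = Di * (UPᵀ * UP) * Dm := by simp only [Matrix.mul_assoc]
      _ = Di * Dm := by rw [hUP, Matrix.mul_one]
      _ = 1 := hDiDm
  have hLM : L * M = 1 := mul_eq_one_comm.mp hML
  have hLdet : IsUnit L.det := by
    have := congrArg Matrix.det hLM
    rw [Matrix.det_mul, Matrix.det_one] at this
    exact IsUnit.of_mul_eq_one _ this
  have hMdet : IsUnit M.det := by
    have := congrArg Matrix.det hML
    rw [Matrix.det_mul, Matrix.det_one] at this
    exact IsUnit.of_mul_eq_one _ this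
  -- Xᵀ X is invertible
  have hXtX : IsUnit (Xᵀ * X).det := by
    apply isUnit_det_of_rank_eq
    rw [Matrix.rank_transpose_mul_self, hX]
  -- cancellation of X
  have hcancel : L * Dm * VPrᵀ = Λr * Yrᵀ := by
    have hXeq : X * (L * Dm * VPrᵀ) = X * (Λr * Yrᵀ) := by
      calc X * (L * Dm * VPrᵀ) = (X * L) * Dm * VPrᵀ := by
            simp only [Matrix.mul_assoc]
        _ = UP * Dm * Dm * VPrᵀ := by rw [hXL]
        _ = UP * (Dm * Dm) * VPrᵀ := by simp only [Matrix.mul_assoc]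
        _ = UP * Matrix.diagonal σ * VPrᵀ := by rw [hDD]
        _ = X * Λr * Yrᵀ := hblock
        _ = X * (Λr * Yrᵀ) := by rw [Matrix.mul_assoc]
    have h2 : (Xᵀ * X) * (L * Dm * VPrᵀ) = (Xᵀ * X) * (Λr * Yrᵀ) := by
      simp only [Matrix.mul_assoc] at hXeq ⊢
      rw [hXeq]
    have h3 := congrArg (fun A => (Xᵀ * X)⁻¹ * A) h2
    simpa [← Matrix.mul_assoc, Matrix.nonsing_inv_mul _ hXtX] using h3
  -- transpose of cancellation
  have hT : VPr * Dm * Lᵀ = Yr * Λrᵀ := by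
    have := congrArg Matrix.transpose hcancel
    simpa [Matrix.transpose_mul, hDm, Matrix.diagonal_transpose, Matrix.mul_assoc] using this
  refine ⟨L, Λrᵀ * Mᵀ, hLdet, hXL.symm, ?_, ?_, ?_⟩
  · calc VPr * Dm = VPr * Dm * (Lᵀ * Mᵀ) := by
          rw [← Matrix.transpose_mul, hML, Matrix.transpose_one, Matrix.mul_one]
      _ = (VPr * Dm * Lᵀ) * Mᵀ := by simp only [Matrix.mul_assoc]
      _ = Yr * Λrᵀ * Mᵀ := by rw [hT]
      _ = Yr * (Λrᵀ * Mᵀ) := by rw [Matrix.mul_assoc]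
  · rw [Matrix.transpose_mul, Matrix.transpose_transpose, Matrix.transpose_transpose,
      ← Matrix.mul_assoc, hLM, Matrix.one_mul]
  · rw [Matrix.rank_mul_eq_left_of_isUnit_det Mᵀ Λrᵀ
      (by rwa [Matrix.det_transpose]), Matrix.rank_transpose]
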